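/- There exists l₀ with 0 < l₀ < L₀ such that for all l with 0 < l ≤ l₀, one has 2π·(√(1 + S(l)) − 1) > 2π·l·√(S(l))·√(1 + S(l)); that is, for sufficiently small l, the area 2π(cosh r_max − 1) of the meridian disk of the maximal tube around a closed geodesic of real length l is strictly greater than the area 2π·l·sinh(r_max)·cosh(r_max) of the boundary torus of the maximal tube. -/
import Mathlib

set_option maxHeartbeats 1000000


open Real

/-- Meyerhoff's function κ(l) = cosh(√(4πl)/3^{1/4}) − 1. -/
noncomputable def kappa (l : ℝ) : ℝ :=
  Real.cosh (Real.sqrt (4 * Real.pi * l) / (3 : ℝ) ^ ((1 : ℝ) / 4)) - 1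

/-- Meyerhoff's length bound L₀ = (√3/(4π))·(log(√2+1))². -/
noncomputable def L0 : ℝ :=
  Real.sqrt 3 / (4 * Real.pi) * (Real.log (Real.sqrt 2 + 1)) ^ 2

/-- S(l) = (1/2)(√(1 − 2κ(l))/κ(l) − 1), so that sinh² r_max(l) = S(l). -/
noncomputable def Sfun (l : ℝ) : ℝ :=
  (1 / 2) * (Real.sqrt (1 - 2 * kappa l) / kappa l - 1)

private lemma exp_le_inv_one_sub {x : ℝ} (hx : x < 1) : Real.exp x ≤ 1 / (1 - x) := by
  have h := Real.add_one_le_exp (-x)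
  have h2 : 0 < 1 - x := by linarith
  rw [le_div_iff₀ h2]
  calc Real.exp x * (1 - x) ≤ Real.exp x * Real.exp (-x) := by
        apply mul_le_mul_of_nonneg_left _ (Real.exp_nonneg x)
        linarith
    _ = 1 := by rw [← Real.exp_add]; simp

private lemma sqrt3_lb : (1.7 : ℝ) ≤ Real.sqrt 3 :=
  Real.le_sqrt_of_sq_le (by norm_num)

private lemma sqrt3_ub : Real.sqrt 3 ≤ 1.8 := by
  rw [show (1.8 : ℝ) = Real.sqrt (1.8 ^ 2) by rw [Real.sqrt_sq] <;> norm_num]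
  exact Real.sqrt_le_sqrt (by norm_num)

/-- cosh x - 1 ≥ x²/2 for all x. -/
private lemma half_sq_le_cosh_sub_one (x : ℝ) (hx : 0 ≤ x) :
    x ^ 2 / 2 ≤ Real.cosh x - 1 := by
  have h1 : Real.cosh x = 1 + 2 * Real.sinh (x / 2) ^ 2 := by
    have := Real.cosh_two_mul (x / 2)
    have h2 := Real.cosh_sq (x / 2)
    rw [show 2 * (x / 2) = x by ring] at this
    rw [this, h2]; ring
  have h3 : x / 2 ≤ Real.sinh (x / 2) := Real.self_le_sinh_iff.mpr (by linarith)
  nlinarith [sq_nonneg (Real.sinh (x / 2) - x / 2)]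

/-- cosh x - 1 ≤ x²/(1-x²) for 0 ≤ x < 1. -/
private lemma cosh_sub_one_le {x : ℝ} (hx0 : 0 ≤ x) (hx1 : x < 1) :
    Real.cosh x - 1 ≤ x ^ 2 / (1 - x ^ 2) := by
  have h1 : Real.exp x ≤ 1 / (1 - x) := exp_le_inv_one_sub hx1
  have h2 : Real.exp (-x) ≤ 1 / (1 - (-x)) := exp_le_inv_one_sub (by linarith)
  have hc : Real.cosh x = (Real.exp x + Real.exp (-x)) / 2 := Real.cosh_eq x
  have hp : 0 < 1 - x := by linarith
  have hq : 0 < 1 + x := by linarith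
  have hpq : 0 < 1 - x ^ 2 := by nlinarith
  have e1 : Real.exp x * (1 - x) ≤ 1 := by
    rw [le_div_iff₀ hp] at h1; linarith
  have e2 : Real.exp (-x) * (1 + x) ≤ 1 := by
    rw [le_div_iff₀ (by linarith : (0:ℝ) < 1 - -x)] at h2; nlinarith
  rw [hc, le_div_iff₀ hpq]
  nlinarith [mul_le_mul_of_nonneg_right e1 hq.le, mul_le_mul_of_nonneg_right e2 hp.le]

/-- For sufficiently small l, the area 2π(cosh r_max − 1) of the meridian
disk of the maximal tube is strictly greater than the area
2π·l·sinh(r_max)·cosh(r_max) of the boundary torus. -/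
theorem meridian_disk_area_gt_boundary_torus_area :
    ∃ l₀ : ℝ, 0 < l₀ ∧ l₀ < L0 ∧ ∀ l : ℝ, 0 < l → l ≤ l₀ →
      2 * Real.pi * l * Real.sqrt (Sfun l) * Real.sqrt (1 + Sfun l) <
        2 * Real.pi * (Real.sqrt (1 + Sfun l) - 1) := by
  have hpi3 : (3 : ℝ) < Real.pi := Real.pi_gt_three
  have hpi4 : Real.pi < 3.15 := by
    have := Real.pi_lt_d2; linarith
  have hpipos : 0 < Real.pi := by linarith
  refine ⟨1 / 100, by norm_num, ?_, ?_⟩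
  · -- 1/100 < L0
    have hlog2 : (0.6931471803 : ℝ) < Real.log 2 := Real.log_two_gt_d9
    have hsqrt2 : (1 : ℝ) ≤ Real.sqrt 2 := Real.le_sqrt_of_sq_le (by norm_num)
    have hmono : Real.log 2 ≤ Real.log (Real.sqrt 2 + 1) :=
      Real.log_le_log (by norm_num) (by linarith)
    have hlogpos : (0.69 : ℝ) ≤ Real.log (Real.sqrt 2 + 1) := by linarith
    have h3 := sqrt3_lb
    unfold L0
    have h4 : (0.69 : ℝ) ^ 2 ≤ (Real.log (Real.sqrt 2 + 1)) ^ 2 := by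
      apply pow_le_pow_left₀ (by norm_num) hlogpos
    have hden : (0 : ℝ) < 4 * Real.pi := by linarith
    rw [div_mul_eq_mul_div, lt_div_iff₀ hden]
    nlinarith
  · intro l hl hl100
    -- notation
    set x := Real.sqrt (4 * Real.pi * l) / (3 : ℝ) ^ ((1 : ℝ) / 4) with hxdef
    have hb : (0 : ℝ) < (3 : ℝ) ^ ((1 : ℝ) / 4) := Real.rpow_pos_of_pos (by norm_num) _
    have h4pil : 0 < 4 * Real.pi * l := by positivity
    have hxpos : 0 < x := div_pos (Real.sqrt_pos.mpr h4pil) hb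
    have hb2 : ((3 : ℝ) ^ ((1 : ℝ) / 4)) ^ 2 = Real.sqrt 3 := by
      rw [← Real.rpow_natCast ((3 : ℝ) ^ ((1 : ℝ) / 4)) 2,
        ← Real.rpow_mul (by norm_num : (0:ℝ) ≤ 3), Real.sqrt_eq_rpow]
      norm_num
    have hx2 : x ^ 2 = 4 * Real.pi * l / Real.sqrt 3 := by
      rw [hxdef, div_pow, Real.sq_sqrt h4pil.le, hb2]
    have hs3l := sqrt3_lb
    have hs3u := sqrt3_ub
    have hs3pos : (0 : ℝ) < Real.sqrt 3 := by linarith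
    -- x bounds
    have hx2ub : x ^ 2 ≤ 0.075 := by
      rw [hx2, div_le_iff₀ hs3pos]
      nlinarith
    have hxub : x < 1 := by nlinarith
    -- kappa bounds
    have hk : kappa l = Real.cosh x - 1 := rfl
    have hklb : x ^ 2 / 2 ≤ kappa l := by
      rw [hk]; exact half_sq_le_cosh_sub_one x hxpos.le
    have hkpos : 0 < kappa l := by nlinarith
    have hkub : kappa l ≤ 0.09 := by
      have h := cosh_sub_one_le hxpos.le hxub
      rw [hk]
      have hpq : 0 < 1 - x ^ 2 := by nlinarith
      have h09 : x ^ 2 / (1 - x ^ 2) ≤ 0.09 := by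
        rw [div_le_iff₀ hpq]; nlinarith
      linarith
    -- sqrt(1 - 2κ) bounds
    have hd1 : (0.9 : ℝ) ≤ Real.sqrt (1 - 2 * kappa l) :=
      Real.le_sqrt_of_sq_le (by nlinarith)
    have hd2 : Real.sqrt (1 - 2 * kappa l) ≤ 1 := by
      have h := Real.sqrt_le_sqrt (show 1 - 2 * kappa l ≤ 1 by linarith)
      rwa [Real.sqrt_one] at h
    -- S bounds
    set S := Sfun l with hSdef
    have hSeq : S = (1 / 2) * (Real.sqrt (1 - 2 * kappa l) / kappa l - 1) := rfl
    have hSlb : (4.5 : ℝ) ≤ S := by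
      have h1 : (10 : ℝ) ≤ Real.sqrt (1 - 2 * kappa l) / kappa l := by
        rw [le_div_iff₀ hkpos]; nlinarith
      rw [hSeq]; linarith
    have hSub : 1 + S ≤ 1 / kappa l := by
      have h2 : Real.sqrt (1 - 2 * kappa l) / kappa l ≤ 1 / kappa l := by
        gcongr
      have h3 : (1 : ℝ) ≤ 1 / kappa l := by
        rw [le_div_iff₀ hkpos]; linarith
      rw [hSeq]; linarith
    have hSpos : (0 : ℝ) < S := by linarith
    have h1Snn : (0 : ℝ) ≤ 1 + S := by linarith
    have key1 : Real.sqrt S * Real.sqrt (1 + S) ≤ 1 + S := by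
      calc Real.sqrt S * Real.sqrt (1 + S)
          ≤ Real.sqrt (1 + S) * Real.sqrt (1 + S) :=
            mul_le_mul_of_nonneg_right (Real.sqrt_le_sqrt (by linarith))
              (Real.sqrt_nonneg _)
        _ = 1 + S := Real.mul_self_sqrt h1Snn
    have hklb2 : 2 * Real.pi * l ≤ Real.sqrt 3 * kappa l := by
      have he : Real.sqrt 3 * (x ^ 2 / 2) = 2 * Real.pi * l := by
        rw [hx2]; field_simp; ring
      have hm := mul_le_mul_of_nonneg_left hklb hs3pos.le
      linarith
    have hlpos : (0 : ℝ) < 2 * Real.pi * l := by positivity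
    have t1 : 2 * Real.pi * l * (Real.sqrt S * Real.sqrt (1 + S))
        ≤ 2 * Real.pi * l * (1 + S) :=
      mul_le_mul_of_nonneg_left key1 hlpos.le
    have t2 : 2 * Real.pi * l * (1 + S) ≤ 2 * Real.pi * l * (1 / kappa l) :=
      mul_le_mul_of_nonneg_left hSub hlpos.le
    have t3 : 2 * Real.pi * l * (1 / kappa l) ≤ Real.sqrt 3 := by
      rw [mul_one_div, div_le_iff₀ hkpos]
      linarith
    have h23 : (2.3 : ℝ) ≤ Real.sqrt (1 + S) :=
      Real.le_sqrt_of_sq_le (by nlinarith)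
    have hRHS : (7.8 : ℝ) ≤ 2 * Real.pi * (Real.sqrt (1 + S) - 1) := by
      have : (1.3 : ℝ) ≤ Real.sqrt (1 + S) - 1 := by linarith
      nlinarith
    calc 2 * Real.pi * l * Real.sqrt S * Real.sqrt (1 + S)
        = 2 * Real.pi * l * (Real.sqrt S * Real.sqrt (1 + S)) := by ring
      _ ≤ Real.sqrt 3 := by linarith
      _ ≤ 1.8 := hs3u
      _ < 7.8 := by norm_num
      _ ≤ 2 * Real.pi * (Real.sqrt (1 + S) - 1) := hRHS
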